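/- arXiv:math/0301176 — 3 statements merged into one kernel-verified Lean document; each statement's English description precedes it below -/
import Mathlib

section
/- Let V and W be finite-dimensional complex vector spaces, and let (B₁, B₂, ι, j) with B₁, B₂ ∈ End(V), ι ∈ Hom(W, V), j ∈ Hom(V, W) satisfy [B₁, B₂] + ι ∘ j = 0. If the quadruple is stable (i.e., the only subspace of V containing the image of ι and invariant under both B₁ and B₂ is V itself), then the action of GL(V) on such quadruples by g·(B₁,B₂,ι,j) = (gB₁g⁻¹, gB₂g⁻¹, gι, jg⁻¹) is free: any g ∈ GL(V) fixing (B₁,B₂,ι,j) equals the identity. -/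
/-!
STATEMENT 0 (ADHM stability implies free GL(V)-action).
V, W are finite-dimensional complex vector spaces, (B₁, B₂, ι, j) is an ADHM datum
satisfying [B₁,B₂] + ι ∘ j = 0 which is stable: the only subspace of V containing
Im ι and invariant under B₁, B₂ is V itself.  Then any g ∈ GL(V) fixing the quadruple
(i.e. g B₁ g⁻¹ = B₁, g B₂ g⁻¹ = B₂, g ι = ι, j g⁻¹ = j) is the identity.
-/
theorem adhm_stable_action_free
    (V W : Type*) [AddCommGroup V] [Module ℂ V] [FiniteDimensional ℂ V]
    [AddCommGroup W] [Module ℂ W] [FiniteDimensional ℂ W]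
    (B₁ B₂ : V →ₗ[ℂ] V) (ι : W →ₗ[ℂ] V) (j : V →ₗ[ℂ] W)
    (hADHM : B₁ ∘ₗ B₂ - B₂ ∘ₗ B₁ + ι ∘ₗ j = 0)
    (hstable : ∀ U : Submodule ℂ V, LinearMap.range ι ≤ U →
        (∀ v ∈ U, B₁ v ∈ U) → (∀ v ∈ U, B₂ v ∈ U) → U = ⊤)
    (g : V ≃ₗ[ℂ] V)
    (h₁ : (g : V →ₗ[ℂ] V) ∘ₗ B₁ = B₁ ∘ₗ (g : V →ₗ[ℂ] V))
    (h₂ : (g : V →ₗ[ℂ] V) ∘ₗ B₂ = B₂ ∘ₗ (g : V →ₗ[ℂ] V))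
    (hι : (g : V →ₗ[ℂ] V) ∘ₗ ι = ι)
    (hj : j ∘ₗ (g : V →ₗ[ℂ] V) = j) :
    g = LinearEquiv.refl ℂ V := by
  have hU : LinearMap.ker ((g : V →ₗ[ℂ] V) - LinearMap.id) = ⊤ := by
    apply hstable
    · rintro v ⟨w, rfl⟩
      simp only [LinearMap.mem_ker, LinearMap.sub_apply, LinearMap.id_apply, sub_eq_zero]
      exact congrFun (congrArg DFunLike.coe hι) w
    · intro v hv
      simp only [LinearMap.mem_ker, LinearMap.sub_apply, LinearMap.id_apply, sub_eq_zero] at *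
      have := congrFun (congrArg DFunLike.coe h₁) v
      simp only [LinearMap.comp_apply] at this
      rw [this, hv]
    · intro v hv
      simp only [LinearMap.mem_ker, LinearMap.sub_apply, LinearMap.id_apply, sub_eq_zero] at *
      have := congrFun (congrArg DFunLike.coe h₂) v
      simp only [LinearMap.comp_apply] at this
      rw [this, hv]
  ext v
  have : v ∈ LinearMap.ker ((g : V →ₗ[ℂ] V) - LinearMap.id) := hU ▸ Submodule.mem_top
  simpa [sub_eq_zero] using this
end

section
/- Let X be a smooth curve over a field, 0 a point of X, Y a smooth surface (or more generally a smooth variety), and L a torsion-free coherent sheaf on Y × X equipped with an embedding into O_{Y×X} ⊗ E (E a finite-dimensional vector space) with X-flat cokernel. If the restriction of L to Y × (X − 0) is a line bundle, then L itself is a line bundle. -/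
/-!
Write a generator `v` of `L` away from the fiber as `v = tᵐ • w` with `t` not dividing some
coordinate `w i₀`; this uses that `t` has finite multiplicity in the nonzero coordinates of `v`.
Saturation of `L` under `t` puts `w` in `L`. Conversely, if `x ∈ L` then `tᵏ • x = a • w`, and
comparing `i₀`-coordinates shows `tᵏ ∣ a` by primality, so `x` is a multiple of `w`.
-/

theorem Submodule.mem_of_pow_smul_mem {R M : Type*} [Semiring R] [AddCommMonoid M] [Module R M]
    {L : Submodule R M} {t : R} (hsat : ∀ x, t • x ∈ L → x ∈ L) (n : ℕ) {x : M}
    (hx : t ^ n • x ∈ L) : x ∈ L := by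
  induction n generalizing x with
  | zero => simpa using hx
  | succ n ih => exact hsat x (ih (by rwa [pow_succ, mul_smul] at hx))

theorem exists_eq_pow_smul_not_dvd {R ι : Type*} [CommMonoidWithZero R] [IsCancelMulZero R]
    [WfDvdMonoid R] {t : R} (ht : ¬IsUnit t) {v : ι → R} (hv : v ≠ 0) :
    ∃ (m : ℕ) (w : ι → R) (i₀ : ι), v = t ^ m • w ∧ ¬t ∣ w i₀ := by
  obtain ⟨i₁, hi₁⟩ := Function.ne_iff.mp hv
  obtain ⟨N, hN⟩ := FiniteMultiplicity.of_not_isUnit ht hi₁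
  classical
  have hex : ∃ n, ¬∀ i, t ^ (n + 1) ∣ v i := ⟨N, fun h ↦ hN (h i₁)⟩
  have hdvd : ∀ i, t ^ Nat.find hex ∣ v i := by
    cases hm : Nat.find hex with
    | zero => simp
    | succ k => exact not_not.mp (Nat.find_min hex (hm ▸ Nat.lt_succ_self k))
  choose w hw using hdvd
  obtain ⟨i₀, hi₀⟩ := not_forall.mp (Nat.find_spec hex)
  refine ⟨Nat.find hex, w, i₀, funext hw, fun ⟨c, hc⟩ ↦ hi₀ ⟨c, ?_⟩⟩
  rw [hw, hc, pow_succ, mul_assoc]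

theorem mem_span_singleton_of_pow_smul_eq_smul {R ι : Type*} [CommRing R] [IsDomain R] {t : R}
    (ht : Prime t) {w x : ι → R} {i₀ : ι} (hi₀ : ¬t ∣ w i₀) {k : ℕ} {a : R}
    (h : t ^ k • x = a • w) : x ∈ Submodule.span R {w} := by
  obtain ⟨c, rfl⟩ : t ^ k ∣ a :=
    ht.pow_dvd_of_dvd_mul_right k hi₀ ⟨x i₀, by simpa using (congrFun h i₀).symm⟩
  rw [mul_smul] at h
  rw [smul_right_injective (ι → R) (pow_ne_zero k ht.ne_zero) h]
  exact Submodule.smul_mem _ c (Submodule.mem_span_singleton_self w)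

theorem line_bundle_off_special_fiber_extends_general
    (R : Type*) [CommRing R] [IsDomain R]
    [UniqueFactorizationMonoid R]
    (t : R) (ht : Prime t)
    (ι : Type*)
    (L : Submodule R (ι → R))
    (hfiber : ∀ x : ι → R, t • x ∈ L → x ∈ L)
    (hgen : ∃ v ∈ L, v ≠ 0 ∧ ∀ x ∈ L, ∃ (k : ℕ) (a : R), t ^ k • x = a • v) :
    ∃ w : ι → R, w ≠ 0 ∧ L = Submodule.span R {w} := by
  obtain ⟨v, hvL, hv0, hvgen⟩ := hgen
  obtain ⟨m, w, i₀, rfl, hi₀⟩ := exists_eq_pow_smul_not_dvd ht.not_isUnit hv0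
  have hwL : w ∈ L := Submodule.mem_of_pow_smul_mem hfiber m hvL
  have hw0 : w ≠ 0 := fun h ↦ hi₀ (by simp [h])
  refine ⟨w, hw0, le_antisymm (fun x hx ↦ ?_) ((Submodule.span_singleton_le_iff_mem w L).mpr hwL)⟩
  obtain ⟨k, a, hka⟩ := hvgen x hx
  rw [smul_smul] at hka
  exact mem_span_singleton_of_pow_smul_eq_smul ht hi₀ hka

theorem line_bundle_off_special_fiber_extends
    (R : Type*) [CommRing R] [IsDomain R] [IsNoetherianRing R]
    [UniqueFactorizationMonoid R]
    (t : R) (ht : Prime t)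
    (ι : Type*) [Fintype ι]
    (L : Submodule R (ι → R))
    (hfiber : ∀ x : ι → R, t • x ∈ L → x ∈ L)
    (hgen : ∃ v ∈ L, v ≠ 0 ∧ ∀ x ∈ L, ∃ (k : ℕ) (a : R), t ^ k • x = a • v) :
    ∃ w : ι → R, w ≠ 0 ∧ L = Submodule.span R {w} :=
  line_bundle_off_special_fiber_extends_general R t ht ι L hfiber hgen
end

section
/- Let Y₁ be an affine algebraic variety over ℂ with an action of a reductive group G, Y₂ an affine variety, and g: Y₁ → Y₂ a G-invariant morphism, inducing f: Y₁//G → Y₂ from the GIT quotient and the quotient map g': Y₁ → Y₁//G. Suppose z' ∈ Y₁//G and z ∈ Y₂ satisfy f(z') = z, and the inclusion of fibers (g')⁻¹(z') ⊆ g⁻¹(z) is an equality. Then the scheme-theoretic fiber f⁻¹(z) is a point (a reduced single point). -/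
/-- The subalgebra of `G`-invariant functions `A^G = ℂ[Y₁]^G`. -/
def invariantSubalgebra (G A : Type*) [Monoid G] [CommRing A] [Algebra ℂ A]
    [MulSemiringAction G A] [SMulCommClass G ℂ A] : Subalgebra ℂ A where
  carrier := {a | ∀ g : G, g • a = a}
  mul_mem' := fun ha hb g => by rw [smul_mul', ha g, hb g]
  one_mem' := fun g => smul_one g
  add_mem' := fun ha hb g => by rw [smul_add, ha g, hb g]
  zero_mem' := fun g => smul_zero g
  algebraMap_mem' := fun c g => by
    rw [Algebra.algebraMap_eq_smul_one, smul_comm g c (1 : A), smul_one]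

/-! The Reynolds operator is an `A^G`-linear retraction `A → A^G`, so the extension to `A` of the
maximal ideal of any point `w` of `Y₁//G` stays proper; by the Nullstellensatz a maximal ideal of
`A` above it is the ideal of a point `x` of `Y₁` with `g'(x) = w`. Then `g(x) = f(w) = z`, so
`x` lies in `(g')⁻¹(z')` and `w = g'(x) = z'`. -/

theorem Ideal.comap_map_eq_self_of_retraction {R S : Type*} [CommRing R] [CommRing S]
    [Algebra R S] (ρ : S →ₗ[R] R) (hρ : ∀ r, ρ (algebraMap R S r) = r) (I : Ideal R) :
    (I.map (algebraMap R S)).comap (algebraMap R S) = I := by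
  refine le_antisymm (fun r hr => ?_) le_comap_map
  rw [mem_comap, ← Submodule.restrictScalars_mem R, ← smul_top_eq_map] at hr
  rw [← hρ r]
  refine Submodule.smul_induction_on hr (fun i hi s _ => ?_) (fun _ _ hs ht => ?_)
  · rw [map_smul, smul_eq_mul]
    exact I.mul_mem_right _ hi
  · rw [map_add]
    exact I.add_mem hs ht

theorem AlgHom.eq_of_ker_le {K S : Type*} [Field K] [CommRing S] [Algebra K S]
    {v w : S →ₐ[K] K} (h : RingHom.ker w ≤ RingHom.ker v) : v = w := by
  ext s
  have hs : s - algebraMap K S (w s) ∈ RingHom.ker w := by simp [RingHom.mem_ker]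
  simpa [RingHom.mem_ker, sub_eq_zero] using h hs

theorem Ideal.IsMaximal.exists_algHom_le_ker {K A : Type*} [Field K] [IsAlgClosed K]
    [CommRing A] [Algebra K A] [Algebra.FiniteType K A] {M : Ideal A} (hM : M.IsMaximal) :
    ∃ x : A →ₐ[K] K, M ≤ RingHom.ker x := by
  let := Ideal.Quotient.field M
  have : Module.Finite K (A ⧸ M) := finite_of_finite_type_of_isJacobsonRing K (A ⧸ M)
  refine ⟨IsAlgClosed.lift.comp (Ideal.Quotient.mkₐ K M), fun a ha => ?_⟩
  simp [RingHom.mem_ker, Ideal.Quotient.eq_zero_iff_mem.mpr ha]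

theorem Subalgebra.exists_algHom_comp_val_eq_of_retraction {K A : Type*} [Field K]
    [IsAlgClosed K] [CommRing A] [Algebra K A] [Algebra.FiniteType K A] (S : Subalgebra K A)
    (ρ : A →ₗ[S] S) (hρ : ∀ s : S, ρ s = s) (w : S →ₐ[K] K) :
    ∃ x : A →ₐ[K] K, x.comp S.val = w := by
  have hproper : (RingHom.ker w).map (algebraMap S A) ≠ ⊤ := fun h => RingHom.ker_ne_top w <| by
    rw [← Ideal.comap_map_eq_self_of_retraction ρ hρ (RingHom.ker w), h, Ideal.comap_top]
  obtain ⟨M, hM, hJM⟩ := Ideal.exists_le_maximal _ hproper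
  obtain ⟨x, hMx⟩ := hM.exists_algHom_le_ker (K := K)
  refine ⟨x, AlgHom.eq_of_ker_le fun s hs => ?_⟩
  exact hMx (hJM (Ideal.mem_map_of_mem _ hs))

/-- Reductivity of `G` is encoded by the Reynolds operator `Rey`, an `A^G`-linear projection of `A`
onto `A^G`; a point of `Spec R` is a `ℂ`-algebra map `R → ℂ`, and `φ : B → A` is `g`. -/
theorem git_fiber_is_a_point_general
    (G A B : Type*) [Group G] [CommRing A] [Algebra ℂ A] [CommRing B] [Algebra ℂ B]
    [MulSemiringAction G A] [SMulCommClass G ℂ A]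
    (hfg : Algebra.FiniteType ℂ A)
    (Rey : A →ₗ[ℂ] A)
    (hRey_mem : ∀ a : A, Rey a ∈ invariantSubalgebra G A)
    (hRey_id : ∀ a ∈ invariantSubalgebra G A, Rey a = a)
    (hRey_lin : ∀ s ∈ invariantSubalgebra G A, ∀ a : A, Rey (s * a) = s * Rey a)
    (φ : B →ₐ[ℂ] A) (hφ : ∀ b : B, φ b ∈ invariantSubalgebra G A)
    (z : B →ₐ[ℂ] ℂ) (z' : ↥(invariantSubalgebra G A) →ₐ[ℂ] ℂ)
    (hfib : ∀ x : A →ₐ[ℂ] ℂ, x.comp φ = z →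
      ∀ a : ↥(invariantSubalgebra G A), x a = z' a) :
    ∀ w : ↥(invariantSubalgebra G A) →ₐ[ℂ] ℂ,
      (∀ b : B, w ⟨φ b, hφ b⟩ = z b) → w = z' := by
  intro w hw
  have := hfg
  let ρ : A →ₗ[invariantSubalgebra G A] invariantSubalgebra G A :=
    { toFun := fun a => ⟨Rey a, hRey_mem a⟩
      map_add' := fun a b => Subtype.ext (map_add Rey a b)
      map_smul' := fun s a => Subtype.ext (hRey_lin s s.2 a) }
  obtain ⟨x, hx⟩ := (invariantSubalgebra G A).exists_algHom_comp_val_eq_of_retraction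
    ρ (fun s => Subtype.ext (hRey_id s s.2)) w
  have hxz : x.comp φ = z := AlgHom.ext fun b => by
    rw [← hw b, ← hx]
    rfl
  ext s
  rw [← hx]
  exact hfib x hxz s

theorem git_fiber_is_a_point
    (G A B : Type*) [Group G] [CommRing A] [Algebra ℂ A] [CommRing B] [Algebra ℂ B]
    [MulSemiringAction G A] [SMulCommClass G ℂ A]
    (hfg : Algebra.FiniteType ℂ A)
    (Rey : A →ₗ[ℂ] A)
    (hRey_mem : ∀ a : A, Rey a ∈ invariantSubalgebra G A)
    (hRey_id : ∀ a ∈ invariantSubalgebra G A, Rey a = a)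
    (hRey_lin : ∀ s ∈ invariantSubalgebra G A, ∀ a : A, Rey (s * a) = s * Rey a)
    (φ : B →ₐ[ℂ] A) (hφ : ∀ b : B, φ b ∈ invariantSubalgebra G A)
    (z : B →ₐ[ℂ] ℂ) (z' : ↥(invariantSubalgebra G A) →ₐ[ℂ] ℂ)
    (hcompat : ∀ b : B, z b = z' ⟨φ b, hφ b⟩)
    (hfib : ∀ x : A →ₐ[ℂ] ℂ, x.comp φ = z →
      ∀ a : ↥(invariantSubalgebra G A), x a = z' a) :
    ∀ w : ↥(invariantSubalgebra G A) →ₐ[ℂ] ℂ,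
      (∀ b : B, w ⟨φ b, hφ b⟩ = z b) → w = z' :=
  git_fiber_is_a_point_general G A B hfg Rey hRey_mem hRey_id hRey_lin φ hφ z z' hfib
end
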